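/- Let n ≥ 3 and G = C_{n,n}. If T = A ∪ {a+1 : a ∈ A} for some subset A of the odd vertices X with |A| = n - 2, then the induced subgraph of G on [2n] \ T has exactly two connected components, and for every u ∈ T the induced subgraph on ([2n] \ T) ∪ {u} is a path graph on five vertices with u as its middle vertex. -/

import Mathlib

open SimpleGraph

/-- The crown graph `C_{n,n}`: vertices `Fin (2*n)`, where index `2i-2` plays the role of the
odd-labelled vertex `2i-1` of the paper and index `2i-1` the even-labelled vertex `2i`.
An even index `u` and an odd index `v` are adjacent iff `v ≠ u + 1`. -/
def crownGraph (n : ℕ) : SimpleGraph (Fin (2 * n)) where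
  Adj u v := (u.val % 2 = 0 ∧ v.val % 2 = 1 ∧ v.val ≠ u.val + 1) ∨
             (v.val % 2 = 0 ∧ u.val % 2 = 1 ∧ u.val ≠ v.val + 1)
  symm := ⟨by intro u v h; tauto⟩
  loopless := ⟨by intro u h; rcases h with ⟨h1, h2, _⟩ | ⟨h1, h2, _⟩ <;> omega⟩

/-- The part `X` (odd-labelled vertices of the paper): even indices. -/
def crownX (n : ℕ) : Finset (Fin (2 * n)) := Finset.univ.filter (fun u => u.val % 2 = 0)

/-- The part `Y` (even-labelled vertices of the paper): odd indices. -/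
def crownY (n : ℕ) : Finset (Fin (2 * n)) := Finset.univ.filter (fun u => u.val % 2 = 1)


/-- Number of connected components of the induced subgraph on `s`. -/
noncomputable def numComponents {V : Type*} (G : SimpleGraph V) (s : Set V) : ℕ :=
  Nat.card (G.induce s).ConnectedComponent


/-- The successor map on `Fin (2*n)` (no wrap-around occurs on even indices). -/
def finSucc {n : ℕ} (a : Fin (2 * n)) : Fin (2 * n) :=
  ⟨(a.val + 1) % (2 * n), Nat.mod_lt _ a.pos⟩

/-!
Split the vertices into the pairs `{2i, 2i+1}`, the non-edges of the crown: two vertices are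
adjacent iff they have different parity and lie in different pairs. `T` is a union of `n - 2`
whole pairs, so its complement is two pairs `{x, x'}`, `{y, y'}` with `x, y` even, and its only
edges are `x y'` and `y x'`, giving two components. A vertex `u ∈ T` lies in a third pair and is
adjacent to exactly the two complement vertices of the other parity; with `x, y` relabelled to
have the parity of `u`, this yields the induced path `x – y' – u – x' – y`.
-/

namespace SimpleGraph

variable {V : Type*} {G : SimpleGraph V}

lemma Reachable.mem_of_adj_closed {C : Set V} (hC : ∀ v w, G.Adj v w → v ∈ C → w ∈ C)
    {v w : V} (h : G.Reachable v w) (hv : v ∈ C) : w ∈ C := by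
  obtain ⟨p⟩ := h
  induction p with
  | nil => exact hv
  | cons hadj _ ih => exact ih (hC _ _ hadj hv)

lemma card_connectedComponent_eq_two {a b c d : V} (hab : G.Adj a b) (hcd : G.Adj c d)
    (hcover : ∀ w, w = a ∨ w = b ∨ w = c ∨ w = d) (hac : ¬G.Reachable a c) :
    Nat.card G.ConnectedComponent = 2 := by
  refine Nat.card_eq_two_iff.mpr ⟨G.connectedComponentMk a, G.connectedComponentMk c,
    fun h => hac (ConnectedComponent.exact h), Set.eq_univ_of_forall <| ConnectedComponent.ind ?_⟩
  intro w
  rcases hcover w with rfl | rfl | rfl | rfl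
  · simp
  · simp [ConnectedComponent.eq, hab.reachable.symm]
  · simp
  · simp [ConnectedComponent.eq, hcd.reachable.symm]

end SimpleGraph

lemma crownGraph_adj_iff {n : ℕ} {v w : Fin (2 * n)} :
    (crownGraph n).Adj v w ↔ v.val % 2 ≠ w.val % 2 ∧ v.val / 2 ≠ w.val / 2 := by
  change _ ∨ _ ↔ _
  omega

lemma mem_crownX {n : ℕ} {v : Fin (2 * n)} : v ∈ crownX n ↔ v.val % 2 = 0 := by
  simp [crownX]

lemma card_crownX (n : ℕ) : (crownX n).card = n := by
  refine Finset.card_eq_of_equiv_fin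
    { toFun := fun v => ⟨v.1.val / 2, by have := v.1.isLt; omega⟩
      invFun := fun i => ⟨⟨2 * i.val, by omega⟩, mem_crownX.mpr (by simp)⟩
      left_inv := fun v => by
        have := mem_crownX.mp v.2
        ext; simp only; omega
      right_inv := fun i => by ext; simp }

lemma mod_two_eq_zero_of_crownX_sdiff_eq {n : ℕ} {A : Finset (Fin (2 * n))} {x y : Fin (2 * n)}
    (hXA : crownX n \ A = {x, y}) : x.val % 2 = 0 ∧ y.val % 2 = 0 := by
  have h : x ∈ crownX n \ A ∧ y ∈ crownX n \ A := by simp [hXA]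
  exact ⟨mem_crownX.mp (Finset.mem_sdiff.mp h.1).1, mem_crownX.mp (Finset.mem_sdiff.mp h.2).1⟩

lemma finSucc_val {n : ℕ} {a : Fin (2 * n)} (ha : a.val % 2 = 0) :
    (finSucc a).val = a.val + 1 := by
  have := a.isLt
  exact Nat.mod_eq_of_lt (by omega)

def pairStart {n : ℕ} (v : Fin (2 * n)) : Fin (2 * n) :=
  ⟨v.val / 2 * 2, by omega⟩

lemma pairStart_mem_crownX {n : ℕ} (v : Fin (2 * n)) : pairStart v ∈ crownX n :=
  mem_crownX.mpr (by simp [pairStart])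

lemma pairStart_eq_iff {n : ℕ} {v x : Fin (2 * n)} (hx : x.val % 2 = 0) :
    pairStart v = x ↔ v = x ∨ v = finSucc x := by
  simp only [pairStart, Fin.ext_iff, finSucc_val hx]
  omega

lemma mem_union_image_finSucc_iff {n : ℕ} {A : Finset (Fin (2 * n))} (hA : A ⊆ crownX n)
    {v : Fin (2 * n)} : v ∈ A ∪ A.image finSucc ↔ pairStart v ∈ A := by
  simp only [Finset.mem_union, Finset.mem_image]
  constructor
  · rintro (hv | ⟨a, ha, rfl⟩)
    · convert hv
      exact (pairStart_eq_iff (mem_crownX.mp (hA hv))).mpr (Or.inl rfl)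
    · convert ha
      exact (pairStart_eq_iff (mem_crownX.mp (hA ha))).mpr (Or.inr rfl)
  · intro hv
    rcases (pairStart_eq_iff (mem_crownX.mp (hA hv))).mp rfl with h | h
    · exact Or.inl (h ▸ hv)
    · exact Or.inr ⟨_, hv, h.symm⟩

lemma coe_union_image_finSucc_compl {n : ℕ} {A : Finset (Fin (2 * n))} (hA : A ⊆ crownX n)
    {x y : Fin (2 * n)} (hXA : crownX n \ A = {x, y}) :
    (↑(A ∪ A.image finSucc) : Set (Fin (2 * n)))ᶜ = {x, finSucc x, y, finSucc y} := by
  obtain ⟨hx, hy⟩ := mod_two_eq_zero_of_crownX_sdiff_eq hXA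
  ext v
  have hstart : pairStart v ∉ A ↔ pairStart v ∈ crownX n \ A := by
    simp [pairStart_mem_crownX]
  simp only [Set.mem_compl_iff, Finset.mem_coe, mem_union_image_finSucc_iff hA, hstart, hXA,
    Finset.mem_insert, Finset.mem_singleton, pairStart_eq_iff hx, pairStart_eq_iff hy,
    Set.mem_insert_iff, Set.mem_singleton_iff, or_assoc]

lemma numComponents_crownGraph_two_pairs {n : ℕ} {x y : Fin (2 * n)} (hx : x.val % 2 = 0)
    (hy : y.val % 2 = 0) (hxy : x ≠ y) :
    numComponents (crownGraph n) {x, finSucc x, y, finSucc y} = 2 := by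
  set S : Set (Fin (2 * n)) := {x, finSucc x, y, finSucc y}
  have hx' := finSucc_val hx
  have hy' := finSucc_val hy
  have hpairs : ∀ w ∈ S, w.val / 2 = x.val / 2 ∨ w.val / 2 = y.val / 2 := by
    simp only [S, Set.mem_insert_iff, Set.mem_singleton_iff]
    rintro w (rfl | rfl | rfl | rfl) <;> omega
  have hxy' : x.val / 2 ≠ y.val / 2 := by rw [Ne, Fin.ext_iff] at hxy; omega
  refine SimpleGraph.card_connectedComponent_eq_two
    (a := ⟨x, by simp [S]⟩) (b := ⟨finSucc y, by simp [S]⟩)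
    (c := ⟨y, by simp [S]⟩) (d := ⟨finSucc x, by simp [S]⟩) ?_ ?_ ?_ ?_
  · simp only [SimpleGraph.induce_adj, crownGraph_adj_iff]
    omega
  · simp only [SimpleGraph.induce_adj, crownGraph_adj_iff]
    omega
  · rintro ⟨w, hw⟩
    simp only [S, Set.mem_insert_iff, Set.mem_singleton_iff] at hw
    simp only [Subtype.mk.injEq]
    tauto
  · -- Every edge of the induced graph joins the two pairs and switches parity, so
    -- "lying in the pair of `x`" and "being even" stay equivalent along walks.
    intro h
    have hyC := h.mem_of_adj_closed
      (C := {w | w.val.val / 2 = x.val / 2 ↔ w.val.val % 2 = 0}) ?_ (by simp [hx])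
    · simp [hy] at hyC
      omega
    · rintro ⟨v, hv⟩ ⟨w, hw⟩ hvw
      simp only [SimpleGraph.induce_adj, crownGraph_adj_iff, Set.mem_ofPred_eq] at hvw ⊢
      have := hpairs v hv
      have := hpairs w hw
      omega

lemma exists_iso_pathGraph_crownGraph_induce {n : ℕ} {p₀ p₁ p₂ p₃ p₄ : Fin (2 * n)}
    {s : Set (Fin (2 * n))} (hs : {p₀, p₁, p₂, p₃, p₄} = s)
    (hpar₀₂ : p₀.val % 2 = p₂.val % 2) (hpar₂₄ : p₂.val % 2 = p₄.val % 2)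
    (hpar₁₃ : p₁.val % 2 = p₃.val % 2) (hpar₁₂ : p₁.val % 2 ≠ p₂.val % 2)
    (hpair₀₃ : p₀.val / 2 = p₃.val / 2) (hpair₁₄ : p₁.val / 2 = p₄.val / 2)
    (hpair₀₁ : p₀.val / 2 ≠ p₁.val / 2) (hpair₀₂ : p₀.val / 2 ≠ p₂.val / 2)
    (hpair₁₂ : p₁.val / 2 ≠ p₂.val / 2) :
    ∃ φ : pathGraph 5 ≃g (crownGraph n).induce s, (φ 2 : Fin (2 * n)) = p₂ := by
  let p : Fin 5 → Fin (2 * n) := ![p₀, p₁, p₂, p₃, p₄]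
  have hinj : p.Injective := by
    intro i j h
    fin_cases i <;> fin_cases j <;> simp [p, Fin.ext_iff] at h ⊢ <;> omega
  have hadj : ∀ {i j}, (crownGraph n).Adj (p i) (p j) ↔ (pathGraph 5).Adj i j := by
    intro i j
    rw [crownGraph_adj_iff, pathGraph_adj]
    fin_cases i <;> fin_cases j <;> simp [p] <;> omega
  let f : pathGraph 5 ↪g crownGraph n := ⟨⟨p, hinj⟩, hadj⟩
  have hrange : Set.range f = s := by
    rw [← hs]
    ext
    simp [f, p]
    tauto
  subst hrange
  exact ⟨f.isoInduceRange, rfl⟩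

lemma exists_iso_pathGraph_crownGraph_induce_union_singleton {n : ℕ} {x y u : Fin (2 * n)}
    (hx : x.val % 2 = 0) (hy : y.val % 2 = 0) (hxy : x ≠ y)
    (hu : u ∉ ({x, finSucc x, y, finSucc y} : Set (Fin (2 * n)))) :
    ∃ φ : pathGraph 5 ≃g (crownGraph n).induce ({x, finSucc x, y, finSucc y} ∪ {u}),
      (φ 2 : Fin (2 * n)) = u := by
  have hx' := finSucc_val hx
  have hy' := finSucc_val hy
  simp only [Set.mem_insert_iff, Set.mem_singleton_iff, Fin.ext_iff, hx', hy'] at hu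
  rw [Ne, Fin.ext_iff] at hxy
  rcases Nat.mod_two_eq_zero_or_one u.val with hu2 | hu2
  · refine exists_iso_pathGraph_crownGraph_induce
      (p₀ := x) (p₁ := finSucc y) (p₃ := finSucc x) (p₄ := y) ?_ ?_ ?_ ?_ ?_ ?_ ?_ ?_ ?_ ?_
    · ext; simp only [Set.mem_insert_iff, Set.mem_singleton_iff, Set.mem_union]; tauto
    all_goals omega
  · refine exists_iso_pathGraph_crownGraph_induce
      (p₀ := finSucc x) (p₁ := y) (p₃ := x) (p₄ := finSucc y) ?_ ?_ ?_ ?_ ?_ ?_ ?_ ?_ ?_ ?_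
    · ext; simp only [Set.mem_insert_iff, Set.mem_singleton_iff, Set.mem_union]; tauto
    all_goals omega

theorem crown_components_and_path (n : ℕ) (hn : 3 ≤ n) (T A : Finset (Fin (2 * n)))
    (hA : A ⊆ crownX n) (hAcard : A.card = n - 2) (hT : T = A ∪ A.image finSucc) :
    numComponents (crownGraph n) ((↑T : Set (Fin (2 * n)))ᶜ) = 2 ∧
    ∀ u ∈ T, ∃ e : Fin 5 ≃ ((↑T : Set (Fin (2 * n)))ᶜ ∪ {u} : Set (Fin (2 * n))),
      (∀ i j : Fin 5,
        ((crownGraph n).induce ((↑T : Set (Fin (2 * n)))ᶜ ∪ {u})).Adj (e i) (e j) ↔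
          (i.val + 1 = j.val ∨ j.val + 1 = i.val)) ∧
      ((e 2 : ((↑T : Set (Fin (2 * n)))ᶜ ∪ {u} : Set (Fin (2 * n)))) : Fin (2 * n)) = u := by
  obtain ⟨x, y, hxy, hXA⟩ : ∃ x y, x ≠ y ∧ crownX n \ A = {x, y} := by
    rw [← Finset.card_eq_two, Finset.card_sdiff_of_subset hA, card_crownX, hAcard]
    omega
  obtain ⟨hx, hy⟩ := mod_two_eq_zero_of_crownX_sdiff_eq hXA
  have hcompl : (↑T : Set (Fin (2 * n)))ᶜ = {x, finSucc x, y, finSucc y} :=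
    hT ▸ coe_union_image_finSucc_compl hA hXA
  rw [hcompl]
  refine ⟨numComponents_crownGraph_two_pairs hx hy hxy, fun u hu => ?_⟩
  obtain ⟨φ, hφ⟩ := exists_iso_pathGraph_crownGraph_induce_union_singleton hx hy hxy
    (hcompl ▸ Set.notMem_compl_iff.mpr hu)
  exact ⟨φ.toEquiv, fun i j => φ.map_adj_iff.trans pathGraph_adj, hφ⟩
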